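/- If the system {sin(ρₙ t)}_{n>p} is complete in L₂(0,2π), then the system {ξₙ}_{n>p} with ξₙ(t) = (cos(ρₙπ)·sin(ρₙ t), −sin(ρₙπ)·cos(ρₙ t)) is complete in L₂(0,π) ⊕ L₂(0,π). -/

import Mathlib

/-!
Glue `-(H₁ + H₂)(π - s)` on `(0, π]` and `(H₁ - H₂)(s - π)` on `(π, 2π]` into one function `h`
on `(0, 2π]`. Since `sin ρ(π - t) = sin ρπ cos ρt - cos ρπ sin ρt` and
`sin ρ(t + π) = sin ρt cos ρπ + cos ρt sin ρπ`, the substitutions `s = π - t` and `s = t + π`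
turn `⟨h, sin ρ·⟩` in `L₂(0, 2π)` into `2 ⟨(H₁, H₂), ξ⟩` in `𝒳`. So if `(H₁, H₂)` is orthogonal to
every `ξₙ`, then `h` is orthogonal to every `sin ρₙ·`, hence `h = 0`, i.e. `H₁ + H₂ = H₁ - H₂ = 0`.
-/

open MeasureTheory Set

/-- First component of `ξₙ`: `cos(ρₙπ)·sin(ρₙ t)`. -/
noncomputable def xi1 (ρ : ℂ) (t : ℝ) : ℂ :=
  Complex.cos (ρ * (Real.pi : ℂ)) * Complex.sin (ρ * (t : ℂ))

/-- Second component of `ξₙ`: `−sin(ρₙπ)·cos(ρₙ t)`. -/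
noncomputable def xi2 (ρ : ℂ) (t : ℝ) : ℂ :=
  -(Complex.sin (ρ * (Real.pi : ℂ))) * Complex.cos (ρ * (t : ℂ))

open Real ComplexConjugate

theorem MeasureTheory.MemLp.restrict_union {α E : Type*} [MeasurableSpace α] [NormedAddCommGroup E]
    {μ : Measure α} {p : ENNReal} {f : α → E} {s t : Set α} (hs : MeasurableSet s)
    (hfs : MemLp f p (μ.restrict s)) (hft : MemLp f p (μ.restrict t)) :
    MemLp f p (μ.restrict (s ∪ t)) := by
  classical
  have h := MemLp.piecewise (μ := μ.restrict (s ∪ t)) hs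
    (by rwa [Measure.restrict_restrict hs, inter_eq_left.2 subset_union_left])
    (hft.mono_measure (by
      rw [Measure.restrict_restrict hs.compl]
      exact Measure.restrict_mono (fun x hx => hx.2.resolve_left hx.1) le_rfl))
  rwa [piecewise_same] at h

theorem MeasureTheory.MemLp.integrable_mul_continuous {R : Type*} [NormedRing R]
    {p : ENNReal} (hp : 1 ≤ p) {a b : ℝ} {f g : ℝ → R}
    (hf : MemLp f p (volume.restrict (Ioc a b))) (hg : Continuous g) :
    Integrable (fun x => f x * g x) (volume.restrict (Ioc a b)) :=
  IntegrableOn.mul_continuousOn_of_subset (hf.integrable hp) hg.continuousOn measurableSet_Ioc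
    isCompact_Icc Ioc_subset_Icc_self

theorem MeasureTheory.MeasurePreserving.ae_eq_of_comp {α β γ : Type*} [MeasurableSpace α]
    [MeasurableSpace β] {μ : Measure α} {ν : Measure β} {f : α → β}
    (hf : MeasurePreserving f μ ν) (he : MeasurableEmbedding f) {g g' : β → γ}
    (h : g ∘ f =ᵐ[μ] g' ∘ f) : g =ᵐ[ν] g' := by
  rw [← hf.map_eq]
  exact he.ae_map_iff.2 h

theorem measurePreserving_const_sub_restrict_Ioc (a b c : ℝ) :
    MeasurePreserving (fun x => a - x) (volume.restrict (Ioc (a - c) (a - b)))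
      (volume.restrict (Ioc b c)) := by
  have h := (Measure.measurePreserving_sub_left volume a).restrict_preimage
    (measurableSet_Ioc (a := b) (b := c))
  rwa [preimage_const_sub_Ioc, Measure.restrict_congr_set Ico_ae_eq_Ioc] at h

theorem measurePreserving_sub_const_restrict_Ioc (a b c : ℝ) :
    MeasurePreserving (fun x => x - a) (volume.restrict (Ioc (b + a) (c + a)))
      (volume.restrict (Ioc b c)) := by
  have h := (measurePreserving_sub_right volume a).restrict_preimage
    (measurableSet_Ioc (a := b) (b := c))
  rwa [preimage_sub_const_Ioc] at h

section IteLe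

variable {E : Type*} {μ : Measure ℝ} {a b c : ℝ} {f g : ℝ → E}

theorem ite_le_ae_eq_left :
    (fun x => if x ≤ b then f x else g x) =ᵐ[μ.restrict (Ioc a b)] f :=
  (ae_restrict_mem measurableSet_Ioc).mono fun _ hx => if_pos hx.2

theorem ite_le_ae_eq_right :
    (fun x => if x ≤ b then f x else g x) =ᵐ[μ.restrict (Ioc b c)] g :=
  (ae_restrict_mem measurableSet_Ioc).mono fun _ hx => if_neg (not_le.2 hx.1)

theorem memLp_ite_le [NormedAddCommGroup E] {p : ENNReal} (hab : a ≤ b) (hbc : b ≤ c)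
    (hf : MemLp f p (μ.restrict (Ioc a b))) (hg : MemLp g p (μ.restrict (Ioc b c))) :
    MemLp (fun x => if x ≤ b then f x else g x) p (μ.restrict (Ioc a c)) := by
  rw [← Ioc_union_Ioc_eq_Ioc hab hbc]
  exact (hf.ae_eq ite_le_ae_eq_left.symm).restrict_union measurableSet_Ioc
    (hg.ae_eq ite_le_ae_eq_right.symm)

theorem setIntegral_ite_le [NormedAddCommGroup E] [NormedSpace ℝ E] (hab : a ≤ b) (hbc : b ≤ c)
    (hf : IntegrableOn f (Ioc a b) μ) (hg : IntegrableOn g (Ioc b c) μ) :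
    ∫ x in Ioc a c, (if x ≤ b then f x else g x) ∂μ =
      (∫ x in Ioc a b, f x ∂μ) + ∫ x in Ioc b c, g x ∂μ := by
  rw [← Ioc_union_Ioc_eq_Ioc hab hbc,
    setIntegral_union (Ioc_disjoint_Ioc_of_le le_rfl) measurableSet_Ioc
      (hf.congr_fun_ae ite_le_ae_eq_left.symm) (hg.congr_fun_ae ite_le_ae_eq_right.symm),
    integral_congr_ae ite_le_ae_eq_left, integral_congr_ae ite_le_ae_eq_right]

theorem ae_eq_of_ite_le_ae_eq {k : ℝ → E} (hab : a ≤ b) (hbc : b ≤ c)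
    (h : (fun x => if x ≤ b then f x else g x) =ᵐ[μ.restrict (Ioc a c)] k) :
    f =ᵐ[μ.restrict (Ioc a b)] k ∧ g =ᵐ[μ.restrict (Ioc b c)] k :=
  ⟨ite_le_ae_eq_left.symm.trans
      (ae_restrict_of_ae_restrict_of_subset (Ioc_subset_Ioc_right hbc) h),
    ite_le_ae_eq_right.symm.trans
      (ae_restrict_of_ae_restrict_of_subset (Ioc_subset_Ioc_left hab) h)⟩

end IteLe

theorem measurePreserving_pi_sub :
    MeasurePreserving (fun t => π - t) (volume.restrict (Ioc 0 π)) (volume.restrict (Ioc 0 π)) := by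
  simpa using measurePreserving_const_sub_restrict_Ioc π 0 π

theorem measurePreserving_sub_pi :
    MeasurePreserving (fun t => t - π) (volume.restrict (Ioc π (2 * π)))
      (volume.restrict (Ioc 0 π)) := by
  simpa [two_mul] using measurePreserving_sub_const_restrict_Ioc π 0 π

theorem mul_conj_sin_pi_sub_add_mul_conj_sin_add_pi (r u v : ℂ) (t : ℝ) :
    -(u + v) * conj (Complex.sin (r * ↑(π - t))) + (u - v) * conj (Complex.sin (r * ↑(t + π))) =
      2 * (u * conj (xi1 r t) + v * conj (xi2 r t)) := by
  push_cast
  rw [mul_sub, mul_add, Complex.sin_sub, Complex.sin_add]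
  simp only [xi1, xi2, map_mul, map_add, map_sub, map_neg]
  ring

section Unfold

noncomputable def unfoldXi (H₁ H₂ : ℝ → ℂ) (s : ℝ) : ℂ :=
  if s ≤ π then (-(H₁ + H₂)) (π - s) else (H₁ - H₂) (s - π)

variable {H₁ H₂ : ℝ → ℂ}

theorem integral_unfoldXi_mul_conj_sin (h₁ : MemLp H₁ 2 (volume.restrict (Ioc 0 π)))
    (h₂ : MemLp H₂ 2 (volume.restrict (Ioc 0 π))) (r : ℂ) :
    ∫ s in Ioc 0 (2 * π), unfoldXi H₁ H₂ s * conj (Complex.sin (r * s)) =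
      2 * ∫ t in Ioc 0 π, (H₁ t * conj (xi1 r t) + H₂ t * conj (xi2 r t)) := by
  set S : ℝ → ℂ := fun s => conj (Complex.sin (r * s))
  have hS : Continuous S := by fun_prop
  have hsum := (h₁.add h₂).neg
  have hdiff := h₁.sub h₂
  calc ∫ s in Ioc 0 (2 * π), unfoldXi H₁ H₂ s * S s
      = (∫ s in Ioc 0 π, (-(H₁ + H₂)) (π - s) * S s) +
          ∫ s in Ioc π (2 * π), (H₁ - H₂) (s - π) * S s := by
        simp only [unfoldXi, ite_mul]
        exact setIntegral_ite_le pi_pos.le (by linarith [pi_pos])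
          ((hsum.comp_measurePreserving measurePreserving_pi_sub).integrable_mul_continuous
            one_le_two hS)
          ((hdiff.comp_measurePreserving measurePreserving_sub_pi).integrable_mul_continuous
            one_le_two hS)
    _ = (∫ t in Ioc 0 π, (-(H₁ + H₂)) t * S (π - t)) +
          ∫ t in Ioc 0 π, (H₁ - H₂) t * S (t + π) := by
        rw [← measurePreserving_pi_sub.integral_comp (measurableEmbedding_subLeft π)
            (fun t => (-(H₁ + H₂)) t * S (π - t)),
          ← measurePreserving_sub_pi.integral_comp (measurableEmbedding_subRight π)
            (fun t => (H₁ - H₂) t * S (t + π))]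
        simp only [sub_sub_cancel, sub_add_cancel]
    _ = ∫ t in Ioc 0 π, 2 * (H₁ t * conj (xi1 r t) + H₂ t * conj (xi2 r t)) := by
        rw [← integral_add (hsum.integrable_mul_continuous one_le_two (by fun_prop))
          (hdiff.integrable_mul_continuous one_le_two (by fun_prop))]
        exact integral_congr_ae (.of_forall fun t =>
          mul_conj_sin_pi_sub_add_mul_conj_sin_add_pi r (H₁ t) (H₂ t) t)
    _ = 2 * ∫ t in Ioc 0 π, (H₁ t * conj (xi1 r t) + H₂ t * conj (xi2 r t)) :=
        integral_const_mul _ _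

theorem memLp_unfoldXi (h₁ : MemLp H₁ 2 (volume.restrict (Ioc 0 π)))
    (h₂ : MemLp H₂ 2 (volume.restrict (Ioc 0 π))) :
    MemLp (unfoldXi H₁ H₂) 2 (volume.restrict (Ioc 0 (2 * π))) :=
  memLp_ite_le pi_pos.le (by linarith [pi_pos])
    ((h₁.add h₂).neg.comp_measurePreserving measurePreserving_pi_sub)
    ((h₁.sub h₂).comp_measurePreserving measurePreserving_sub_pi)

theorem ae_eq_zero_of_unfoldXi_ae_eq_zero
    (h : unfoldXi H₁ H₂ =ᵐ[volume.restrict (Ioc 0 (2 * π))] 0) :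
    H₁ =ᵐ[volume.restrict (Ioc 0 π)] 0 ∧ H₂ =ᵐ[volume.restrict (Ioc 0 π)] 0 := by
  obtain ⟨hleft, hright⟩ := ae_eq_of_ite_le_ae_eq pi_pos.le (by linarith [pi_pos]) h
  have hsum : -(H₁ + H₂) =ᵐ[volume.restrict (Ioc 0 π)] 0 :=
    measurePreserving_pi_sub.ae_eq_of_comp (measurableEmbedding_subLeft π) hleft
  have hdiff : H₁ - H₂ =ᵐ[volume.restrict (Ioc 0 π)] 0 :=
    measurePreserving_sub_pi.ae_eq_of_comp (measurableEmbedding_subRight π) hright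
  constructor <;> filter_upwards [hsum, hdiff] with t hs hd
  · simp only [Pi.neg_apply, Pi.add_apply, Pi.sub_apply, Pi.zero_apply] at hs hd ⊢
    linear_combination (hd - hs) / 2
  · simp only [Pi.neg_apply, Pi.add_apply, Pi.sub_apply, Pi.zero_apply] at hs hd ⊢
    linear_combination -(hs + hd) / 2

end Unfold

/-- If the system `{sin(ρₙ t)}_{n>p}` is complete in `L₂(0,2π)`
(the only element orthogonal to all of them is zero), then the system
`{ξₙ}_{n>p}` with `ξₙ(t) = (cos(ρₙπ)sin(ρₙt), −sin(ρₙπ)cos(ρₙt))`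
is complete in `𝒳 = L₂(0,π) ⊕ L₂(0,π)`. -/
theorem xi_complete (p : ℕ) (ρ : ℕ → ℂ)
    (hcomp : ∀ h : ℝ → ℂ, MemLp h 2 (volume.restrict (Ioc (0:ℝ) (2 * Real.pi))) →
      (∀ n, p < n →
        ∫ t in Ioc (0:ℝ) (2 * Real.pi),
          h t * (starRingEnd ℂ) (Complex.sin (ρ n * (t : ℂ))) = 0) →
      h =ᵐ[volume.restrict (Ioc (0:ℝ) (2 * Real.pi))] 0) :
    ∀ H₁ H₂ : ℝ → ℂ, MemLp H₁ 2 (volume.restrict (Ioc (0:ℝ) Real.pi)) →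
      MemLp H₂ 2 (volume.restrict (Ioc (0:ℝ) Real.pi)) →
      (∀ n, p < n →
        ∫ t in Ioc (0:ℝ) Real.pi,
          (H₁ t * (starRingEnd ℂ) (xi1 (ρ n) t) +
            H₂ t * (starRingEnd ℂ) (xi2 (ρ n) t)) = 0) →
      (H₁ =ᵐ[volume.restrict (Ioc (0:ℝ) Real.pi)] 0 ∧
        H₂ =ᵐ[volume.restrict (Ioc (0:ℝ) Real.pi)] 0) := by
  intro H₁ H₂ h₁ h₂ hortho
  refine ae_eq_zero_of_unfoldXi_ae_eq_zero (hcomp _ (memLp_unfoldXi h₁ h₂) fun n hn => ?_)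
  rw [integral_unfoldXi_mul_conj_sin h₁ h₂, hortho n hn, mul_zero]
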